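/- arXiv:2210.11032 — 6 statements merged into one kernel-verified Lean document; each statement's English description precedes it below -/
import Mathlib

section
/- The sequence t defined by t(1)=0, t(2)=1, t(3)=2, and t(n) = min over d ≥ 1 of (d + t(⌈(n-1)/d⌉)) for n ≥ 4, is monotone increasing in n. -/
/-- ceiling division: `cdiv a b = ⌈a / b⌉`. -/
def cdiv (a b : ℕ) : ℕ := (a + b - 1) / b

lemma cdiv_pos {a d : ℕ} (ha : 1 ≤ a) (hd : 1 ≤ d) : 1 ≤ cdiv a d := by
  unfold cdiv
  rw [Nat.le_div_iff_mul_le hd]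
  omega

lemma cdiv_le_self {a d : ℕ} (hd : 1 ≤ d) : cdiv a d ≤ a := by
  unfold cdiv
  have h : a ≤ d * a := Nat.le_mul_of_pos_left a hd
  rw [Nat.div_le_iff_le_mul_add_pred hd]
  omega

lemma cdiv_mono {a b : ℕ} (d : ℕ) (h : a ≤ b) : cdiv a d ≤ cdiv b d := by
  unfold cdiv
  exact Nat.div_le_div_right (by omega)

/-- the sequence `t` defined by `t 1 = 0`, `t 2 = 1`, `t 3 = 2` and
`t n = min_{d ≥ 1} (d + t ⌈(n-1)/d⌉)` for `n ≥ 4` is monotone increasing. -/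
theorem t_monotone (t : ℕ → ℕ)
    (h1 : t 1 = 0) (h2 : t 2 = 1) (h3 : t 3 = 2)
    (hrec : ∀ n, 4 ≤ n → t n = sInf {x : ℕ | ∃ d, 1 ≤ d ∧ x = d + t (cdiv (n - 1) d)}) :
    ∀ m n : ℕ, 1 ≤ m → m ≤ n → t m ≤ t n := by
  have main : ∀ n m : ℕ, 1 ≤ m → m ≤ n → t m ≤ t n := by
    intro n
    induction n using Nat.strong_induction_on with
    | _ n ih =>
      intro m hm hmn
      rcases eq_or_lt_of_le hmn with rfl | hlt
      · exact le_refl _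
      -- m ≤ n - 1 < n
      have hstep : t (n - 1) ≤ t n := by
        -- n ≥ 2
        have hn2 : 2 ≤ n := by omega
        rcases eq_or_lt_of_le hn2 with h | h
        · simp [← h, h1, h2]
        rcases eq_or_lt_of_le (show 3 ≤ n by omega) with h | h
        · simp [← h, h2, h3]
        rcases eq_or_lt_of_le (show 4 ≤ n by omega) with h | h
        · -- n = 4 : show t 3 ≤ t 4
          subst h
          rw [show (4:ℕ) - 1 = 3 from rfl, hrec 4 (le_refl _), h3]
          apply le_csInf
          · exact ⟨1 + t (cdiv 3 1), 1, le_refl _, rfl⟩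
          · rintro x ⟨d, hd, rfl⟩
            rcases eq_or_lt_of_le hd with rfl | hd2
            · have : cdiv 3 1 = 3 := by decide
              rw [this, h3]; omega
            · omega
        · -- n ≥ 5
          have hn5 : 5 ≤ n := by omega
          rw [hrec n (by omega), hrec (n - 1) (by omega)]
          apply le_csInf
          · exact ⟨1 + t (cdiv (n - 1) 1), 1, le_refl _, rfl⟩
          rintro x ⟨d, hd, rfl⟩
          have h1' : cdiv (n - 1 - 1) d ≤ cdiv (n - 1) d := cdiv_mono d (by omega)
          have h2' : 1 ≤ cdiv (n - 1 - 1) d := cdiv_pos (by omega) hd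
          have h3' : cdiv (n - 1) d ≤ n - 1 := cdiv_le_self hd
          have hT : t (cdiv (n - 1 - 1) d) ≤ t (cdiv (n - 1) d) :=
            ih (cdiv (n - 1) d) (by omega) _ h2' h1'
          calc sInf {x : ℕ | ∃ d, 1 ≤ d ∧ x = d + t (cdiv (n - 1 - 1) d)}
              ≤ d + t (cdiv (n - 1 - 1) d) := Nat.sInf_le ⟨d, hd, rfl⟩
            _ ≤ d + t (cdiv (n - 1) d) := by omega
      have := ih (n - 1) (by omega) m hm (by omega)
      omega
  intro m n hm hmn
  exact main n m hm hmn
end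

section
/- There exists an absolute constant C such that the sequence t defined by t(1)=0, t(2)=1, t(3)=2, and t(n) = min_{d ≥ 1} (d + t(⌈(n-1)/d⌉)) for n ≥ 4 satisfies t(n) ≥ 3·log₃(n) − C for all n ≥ 1. -/
lemma cube_13 : ((3:ℝ) ^ ((1:ℝ)/3)) ^ (3:ℕ) = 3 := by
  rw [← Real.rpow_natCast ((3:ℝ) ^ ((1:ℝ)/3)) 3, ← Real.rpow_mul (by norm_num)]
  norm_num

lemma cube_23 : ((3:ℝ) ^ ((2:ℝ)/3)) ^ (3:ℕ) = 9 := by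
  rw [← Real.rpow_natCast ((3:ℝ) ^ ((2:ℝ)/3)) 3, ← Real.rpow_mul (by norm_num)]
  norm_num

lemma h13 : (1.44:ℝ) ≤ (3:ℝ) ^ ((1:ℝ)/3) := by
  have h0 : (0:ℝ) ≤ (3:ℝ) ^ ((1:ℝ)/3) := Real.rpow_nonneg (by norm_num) _
  nlinarith [cube_13, sq_nonneg ((3:ℝ) ^ ((1:ℝ)/3) - 1.44), sq_nonneg ((3:ℝ) ^ ((1:ℝ)/3) + 1.44)]

lemma h23 : (2.08:ℝ) ≤ (3:ℝ) ^ ((2:ℝ)/3) := by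
  have h0 : (0:ℝ) ≤ (3:ℝ) ^ ((2:ℝ)/3) := Real.rpow_nonneg (by norm_num) _
  nlinarith [cube_23, sq_nonneg ((3:ℝ) ^ ((2:ℝ)/3) - 2.08), sq_nonneg ((3:ℝ) ^ ((2:ℝ)/3) + 2.08)]

lemma hdge3 : ∀ d : ℕ, 3 ≤ d → (d:ℝ) ≤ (3:ℝ) ^ ((d:ℝ)/3) := by
  intro d hd
  induction d, hd using Nat.le_induction with
  | base =>
    have h : (((3:ℕ)):ℝ)/3 = (1:ℝ) := by norm_num
    rw [h, Real.rpow_one]; norm_num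
  | succ k hk ih =>
    push_cast
    rw [show ((k:ℝ)+1)/3 = (k:ℝ)/3 + (1:ℝ)/3 by ring, Real.rpow_add (by norm_num)]
    have hkr : (3:ℝ) ≤ (k:ℝ) := by exact_mod_cast hk
    have hmul : (k:ℝ) * 1.44 ≤ (3:ℝ) ^ ((k:ℝ)/3) * (3:ℝ) ^ ((1:ℝ)/3) :=
      mul_le_mul ih h13 (by norm_num) (Real.rpow_nonneg (by norm_num) _)
    linarith

/-- there is an absolute constant `C` such that the sequence `t` defined by
`t 1 = 0`, `t 2 = 1`, `t 3 = 2` and `t n = min_{d ≥ 1} (d + t ⌈(n-1)/d⌉)` for `n ≥ 4`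
satisfies `t n ≥ 3 log₃ n − C` for all `n ≥ 1`. -/
theorem t_ge_log (t : ℕ → ℕ)
    (h1 : t 1 = 0) (h2 : t 2 = 1) (h3 : t 3 = 2)
    (hrec : ∀ n, 4 ≤ n → t n = sInf {x : ℕ | ∃ d, 1 ≤ d ∧ x = d + t (cdiv (n - 1) d)}) :
    ∃ C : ℝ, ∀ n : ℕ, 1 ≤ n → 3 * Real.logb 3 n - C ≤ (t n : ℝ) := by
  -- main invariant
  have key : ∀ n : ℕ, 1 ≤ n → (n:ℝ) + 1/2 ≤ 10 * (3:ℝ) ^ ((t n : ℝ)/3) := by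
    intro n
    induction n using Nat.strong_induction_on with
    | _ n ih =>
      intro hn
      have E1 : ∀ a : ℕ, (1:ℝ) ≤ (3:ℝ) ^ ((t a : ℝ)/3) := by
        intro a
        rw [show (1:ℝ) = (3:ℝ) ^ (0:ℝ) by norm_num]
        exact Real.rpow_le_rpow_of_exponent_le (by norm_num) (by positivity)
      rcases Nat.lt_or_ge n 4 with h4 | h4
      · have hE := E1 n
        have hn3 : (n:ℝ) ≤ 3 := by exact_mod_cast (show n ≤ 3 by omega)
        linarith
      · -- extract the minimizing d
        have hne : {x : ℕ | ∃ d, 1 ≤ d ∧ x = d + t (cdiv (n - 1) d)}.Nonempty :=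
          ⟨1 + t (cdiv (n-1) 1), 1, le_rfl, rfl⟩
        have hmem : t n ∈ {x : ℕ | ∃ d, 1 ≤ d ∧ x = d + t (cdiv (n - 1) d)} := by
          rw [hrec n h4]; exact Nat.sInf_mem hne
        obtain ⟨d, hd1, heq⟩ := hmem
        set m := cdiv (n - 1) d with hm
        have hdpos : 0 < d := hd1
        have hm' : m = (n - 1 + d - 1) / d := rfl
        -- n ≤ d * m + 1
        have hnm : n ≤ d * m + 1 := by
          have e1 := Nat.div_add_mod (n - 1 + d - 1) d
          rw [← hm'] at e1
          have e2 : (n - 1 + d - 1) % d < d := Nat.mod_lt _ hdpos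
          generalize d * m = P at e1 ⊢
          omega
        have hm1 : 1 ≤ m := by
          rw [hm']; exact (Nat.one_le_div_iff hdpos).mpr (by omega)
        have hmlt : m < n := by
          rcases Nat.lt_or_ge d 2 with hd2 | hd2
          · have : d = 1 := by omega
            subst this
            rw [hm']; simp; omega
          · rw [hm']
            rw [Nat.div_lt_iff_lt_mul hdpos]
            have := Nat.add_le_mul (show 2 ≤ n by omega) hd2
            omega
        -- IH at m
        have ihm := ih m hmlt hm1
        set E := (3:ℝ) ^ ((t m : ℝ)/3) with hE
        have hE1 : (1:ℝ) ≤ E := E1 m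
        rw [heq]
        have hsplit : (3:ℝ) ^ (((d + t m : ℕ) : ℝ)/3) = (3:ℝ) ^ ((d:ℝ)/3) * E := by
          rw [hE]
          rw [show (((d + t m : ℕ) : ℝ))/3 = (d:ℝ)/3 + ((t m : ℕ):ℝ)/3 by push_cast; ring]
          rw [Real.rpow_add (by norm_num)]
        rw [hsplit]
        have hnr : (n:ℝ) ≤ (d:ℝ) * (m:ℝ) + 1 := by exact_mod_cast hnm
        rcases (show d = 1 ∨ d = 2 ∨ 3 ≤ d by omega) with rfl | rfl | hd3
        · have hmul : 10 * E * 1.44 ≤ 10 * E * ((3:ℝ) ^ ((1:ℝ)/3)) :=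
            mul_le_mul_of_nonneg_left h13 (by linarith)
          push_cast at hnr ⊢
          linarith
        · have hmul : 10 * E * 2.08 ≤ 10 * E * ((3:ℝ) ^ ((2:ℝ)/3)) :=
            mul_le_mul_of_nonneg_left h23 (by linarith)
          push_cast at hnr ⊢
          linarith
        · have hD := hdge3 d hd3
          have hdr : (3:ℝ) ≤ (d:ℝ) := by exact_mod_cast hd3
          have hA : (d:ℝ) * ((m:ℝ) + 1/2) ≤ (d:ℝ) * (10 * E) :=
            mul_le_mul_of_nonneg_left ihm (by linarith)
          have hB : (d:ℝ) * (10 * E) ≤ ((3:ℝ) ^ ((d:ℝ)/3)) * (10 * E) :=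
            mul_le_mul_of_nonneg_right hD (by linarith)
          nlinarith
  -- conclude
  refine ⟨3 * Real.logb 3 10, fun n hn => ?_⟩
  have hk := key n hn
  have hnpos : (0:ℝ) < n := by exact_mod_cast hn
  have hle : (n:ℝ) ≤ 10 * (3:ℝ) ^ ((t n : ℝ)/3) := by linarith
  have hlog := Real.logb_le_logb_of_le (by norm_num : (1:ℝ) < 3) hnpos hle
  rw [Real.logb_mul (by norm_num) (by positivity),
      Real.logb_rpow (by norm_num) (by norm_num)] at hlog
  linarith
end

section
/- Let T be a finite tree on n vertices and v ∈ V(T). Then there exists a strictly increasing (by inclusion) chain of vertex subsets B₁ ⊊ B₂ ⊊ ⋯ ⊊ B_m of V(T), of length m ≥ ⌊log₂ n⌋ + 1, such that v ∈ B₁ and for every i both T[B_i] and T[V(T) \ B_i together with one cut vertex] are connected; more precisely, for each i there is a vertex v_i with B_i ∩ A_i = {v_i}, A_i ∪ B_i = V(T), and T[A_i], T[B_i] both connected. -/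
/-!
Remove `v` from the connected graph and let `Y` be a component of what remains: `Y` and its
complement (which contains `v`) are both connected and joined by an edge at `v`. The larger
side `S` has at least half of the vertices. A nested cut chain of `G[S]`, rooted at the endpoint
in `S` of that edge, lifts to `G` by adding the other side to every cut side, and `{v}` can be
put in front of it. Each halving of the vertex count thus adds one set to the chain.
-/

theorem Nat.log_le_log_add_one_of_div_le {b n k : ℕ} (h : n / b ≤ k) :
    Nat.log b n ≤ Nat.log b k + 1 := by
  have := Nat.log_mono_right (b := b) h
  rw [Nat.log_div_base] at this
  omega

namespace SimpleGraph

variable {V : Type*} {G : SimpleGraph V}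

theorem connected_induce_singleton (v : V) : (G.induce {v}).Connected := by
  rw [induce_singleton_eq_top]
  exact connected_top

theorem Connected.induce_univ (hG : G.Connected) : (G.induce Set.univ).Connected :=
  (induceUnivIso G).connected_iff.mpr hG

theorem Connected.induce_image_val {S : Set V} {A : Set S}
    (h : ((G.induce S).induce A).Connected) : (G.induce (Subtype.val '' A)).Connected :=
  h.map (induceHom (Embedding.induce S).toHom (Set.mapsTo_image _ _))
    (by rintro ⟨_, a, ha, rfl⟩; exact ⟨⟨a, ha⟩, rfl⟩)

theorem Connected.exists_adj_mem_supp (hG : G.Connected) {v : V}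
    (K : (G.induce {v}ᶜ).ConnectedComponent) : ∃ x ∈ K.supp, G.Adj v x := by
  obtain ⟨x₀, hx₀⟩ := K.nonempty_supp
  obtain ⟨p⟩ := hG.preconnected x₀ v
  obtain ⟨⟨⟨_, y⟩, hxy⟩, -, ⟨x, hx, rfl⟩, hy⟩ :=
    p.exists_boundary_dart (Subtype.val '' K.supp) ⟨x₀, hx₀, rfl⟩
      (by rintro ⟨x, -, hx⟩; exact x.2 hx)
  by_cases hyv : y = v
  · exact ⟨x, hx, hyv ▸ hxy.symm⟩
  · have hyK : ⟨y, hyv⟩ ∈ K.supp :=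
      (K.mem_supp_congr_adj (v := x) (w := ⟨y, hyv⟩) hxy).1 hx
    exact absurd ⟨_, hyK, rfl⟩ hy

theorem Connected.exists_connected_induce_connected_compl (hG : G.Connected) {u v : V}
    (huv : u ≠ v) :
    ∃ Y : Set V, v ∉ Y ∧ (∃ y ∈ Y, G.Adj v y) ∧
      (G.induce Y).Connected ∧ (G.induce Yᶜ).Connected := by
  set K := (G.induce {v}ᶜ).connectedComponentMk ⟨u, huv⟩
  have hvK : v ∉ Subtype.val '' K.supp := by rintro ⟨x, -, hx⟩; exact x.2 hx
  obtain ⟨y, hyK, hvy⟩ := hG.exists_adj_mem_supp K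
  refine ⟨Subtype.val '' K.supp, hvK, ⟨y, ⟨y, hyK, rfl⟩, hvy⟩,
    K.connected_toSimpleGraph.induce_image_val, ?_⟩
  refine induce_connected_of_patches v hvK fun {x} hx => ?_
  by_cases hxv : x = v
  · subst hxv
    exact ⟨{x}, Set.singleton_subset_iff.mpr hx, rfl, rfl, Reachable.refl _⟩
  set K' := (G.induce {v}ᶜ).connectedComponentMk ⟨x, hxv⟩
  obtain ⟨z, hzK', hvz⟩ := hG.exists_adj_mem_supp K'
  have hK'K : Subtype.val '' K'.supp ⊆ (Subtype.val '' K.supp)ᶜ := by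
    rintro _ ⟨t, htK', rfl⟩ ⟨t', htK, htt'⟩
    rw [Subtype.val_injective htt'] at htK
    exact hx ⟨⟨x, hxv⟩, htK'.symm.trans htK, rfl⟩
  have hconn : (G.induce ({v} ∪ Subtype.val '' K'.supp)).Connected :=
    connected_induce_union (connected_induce_singleton v).preconnected
      K'.connected_toSimpleGraph.induce_image_val.preconnected rfl ⟨z, hzK', rfl⟩ hvz
  exact ⟨_, Set.union_subset (Set.singleton_subset_iff.mpr hvK) hK'K, Or.inl rfl,
    Or.inr ⟨⟨x, hxv⟩, rfl, rfl⟩, hconn.preconnected _ _⟩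

theorem Connected.exists_half_connected_side [Finite V] (hG : G.Connected) {u v : V}
    (huv : u ≠ v) :
    ∃ (S : Set V) (r c : V), r ∈ S ∧ c ∉ S ∧ G.Adj r c ∧ (v = r ∨ v ∉ S) ∧
      (G.induce S).Connected ∧ (G.induce Sᶜ).Connected ∧ Nat.card V / 2 ≤ Nat.card S := by
  obtain ⟨Y, hvY, ⟨y, hyY, hvy⟩, hY, hYc⟩ := hG.exists_connected_induce_connected_compl huv
  have hsum : Nat.card Y + Nat.card ↥Yᶜ = Nat.card V := by
    simpa only [Nat.card_coe_set_eq] using Set.ncard_add_ncard_compl Y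
  rcases le_total (Nat.card Y) (Nat.card ↥Yᶜ) with h | h
  · refine ⟨Yᶜ, v, y, hvY, not_not.mpr hyY, hvy, Or.inl rfl, hYc, ?_, by omega⟩
    rwa [compl_compl]
  · exact ⟨Y, y, v, hyY, hvY, hvy.symm, Or.inr hvY, hY, hYc, by omega⟩

def IsCutSide (G : SimpleGraph V) (B : Set V) : Prop :=
  ∃ (A : Set V) (w : V), A ∪ B = Set.univ ∧ A ∩ B = {w} ∧
    (G.induce A).Connected ∧ (G.induce B).Connected

theorem Connected.isCutSide_singleton (hG : G.Connected) (v : V) : G.IsCutSide {v} :=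
  ⟨Set.univ, v, Set.univ_union _, Set.univ_inter _, hG.induce_univ,
    connected_induce_singleton v⟩

theorem IsCutSide.image_val_union_compl {S : Set V} {B : Set S} (hB : (G.induce S).IsCutSide B)
    (hSc : (G.induce Sᶜ).Connected) {r : S} (hr : r ∈ B) {c : V} (hc : c ∉ S)
    (hrc : G.Adj r c) : G.IsCutSide (Subtype.val '' B ∪ Sᶜ) := by
  obtain ⟨A, w, hAB, hAB', hA, hB⟩ := hB
  have hASc : Subtype.val '' A ∩ Sᶜ = ∅ := Set.disjoint_iff_inter_eq_empty.mp <|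
    disjoint_compl_right.mono_left (Subtype.coe_image_subset S A)
  refine ⟨Subtype.val '' A, w, ?_, ?_, hA.induce_image_val,
    connected_induce_union hB.induce_image_val.preconnected hSc.preconnected
      ⟨r, hr, rfl⟩ hc hrc⟩
  · rw [← Set.union_assoc, ← Set.image_union, hAB, Set.image_univ, Subtype.range_coe,
      Set.union_compl_self]
  · rw [Set.inter_union_distrib_left, ← Set.image_inter Subtype.val_injective, hAB',
      Set.image_singleton, hASc, Set.union_empty]

theorem preimage_val_image_val_union_compl {S : Set V} (B : Set S) :
    Subtype.val ⁻¹' (Subtype.val '' B ∪ Sᶜ) = B := by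
  ext x
  simp

/-- The conditions on `v` and on cut sides are imposed at every index, not only below `m`, so that
the choice functions for `A` and `w` are total. -/
def IsNestedCutChain (G : SimpleGraph V) (v : V) (m : ℕ) (B : ℕ → Set V) : Prop :=
  (∀ i, v ∈ B i) ∧ (∀ i, ∀ j < m, i < j → B i ⊂ B j) ∧ ∀ i, G.IsCutSide (B i)

theorem IsNestedCutChain.lift {S : Set V} {r : S} {m : ℕ} {B : ℕ → Set S}
    (h : (G.induce S).IsNestedCutChain r m B) (hG : G.Connected)
    (hSc : (G.induce Sᶜ).Connected) {c : V} (hc : c ∉ S) (hrc : G.Adj r c) {v : V}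
    (hv : v = r ∨ v ∉ S) :
    G.IsNestedCutChain v (m + 1) fun | 0 => {v} | k + 1 => Subtype.val '' B k ∪ Sᶜ := by
  obtain ⟨hrB, hchain, hcut⟩ := h
  have hr : ∀ k, ↑r ∈ Subtype.val '' B k ∪ Sᶜ := fun k => Or.inl ⟨r, hrB k, rfl⟩
  have hvB : ∀ k, v ∈ Subtype.val '' B k ∪ Sᶜ := fun k => hv.elim (· ▸ hr k) Or.inr
  refine ⟨?_, ?_, ?_⟩
  · rintro (_ | k)
    exacts [rfl, hvB k]
  · rintro (_ | i) (_ | j) hj hij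
    · omega
    · refine (Set.singleton_subset_iff.mpr (hvB j)).ssubset_of_ne fun h => hrc.ne ?_
      have hr' : (r : V) ∈ ({v} : Set V) := h ▸ hr j
      have hc' : c ∈ ({v} : Set V) := h ▸ Or.inr hc
      exact hr'.trans hc'.symm
    · omega
    · have hij := hchain i j (by omega) (by omega)
      refine (Set.union_subset_union_left _ (Set.image_mono hij.subset)).ssubset_of_ne fun h => ?_
      refine hij.ne ?_
      rw [← preimage_val_image_val_union_compl (B i), h, preimage_val_image_val_union_compl]
  · rintro (_ | k)
    exacts [hG.isCutSide_singleton v, (hcut k).image_val_union_compl hSc (hrB k) hc hrc]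

theorem Connected.exists_isNestedCutChain [Finite V] (hG : G.Connected) (v : V) :
    ∃ (m : ℕ) (B : ℕ → Set V), Nat.log 2 (Nat.card V) < m ∧ G.IsNestedCutChain v m B := by
  induction hn : Nat.card V using Nat.strong_induction_on generalizing V with
  | _ n ih =>
  by_cases hV : ∃ u, u ≠ v
  · obtain ⟨u, huv⟩ := hV
    obtain ⟨S, r, c, hr, hc, hrc, hvr, hS, hSc, hcard⟩ := hG.exists_half_connected_side huv
    obtain ⟨m, B, hm, hB⟩ :=
      ih (Nat.card S) (hn ▸ Finite.card_subtype_lt hc) hS ⟨r, hr⟩ rfl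
    refine ⟨m + 1, _, ?_, hB.lift hG hSc hc hrc hvr⟩
    have := Nat.log_le_log_add_one_of_div_le (b := 2) (hn ▸ hcard)
    omega
  · push Not at hV
    refine ⟨1, fun _ => {v}, ?_, fun _ => rfl, fun i j hj hij => by omega,
      fun _ => hG.isCutSide_singleton v⟩
    rw [← hn, Nat.card_eq_one_iff_exists.mpr ⟨v, hV⟩, Nat.log_one_right]
    exact one_pos

end SimpleGraph

/-- weakened nested-cut lemma for trees: let `T` be a finite tree on `n`
vertices and `v ∈ V(T)`.  Then there is a strictly increasing chain of vertex sets
`B 0 ⊊ B 1 ⊊ ⋯ ⊊ B (m-1)` of length `m ≥ ⌊log₂ n⌋ + 1`, with `v ∈ B 0`, such that for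
each `i < m` there are `A i` and a vertex `w i` with `A i ∪ B i = V(T)`,
`A i ∩ B i = {w i}`, and both `T[A i]` and `T[B i]` connected. -/
theorem nested_cut_lemma_log {V : Type*} [Fintype V] (T : SimpleGraph V)
    (hT : T.IsTree) (v : V) :
    ∃ (m : ℕ) (A B : ℕ → Set V) (w : ℕ → V),
      m ≥ Nat.log 2 (Fintype.card V) + 1 ∧
      v ∈ B 0 ∧
      (∀ i, ∀ j < m, i < j → B i ⊂ B j) ∧
      (∀ i < m, A i ∪ B i = Set.univ) ∧
      (∀ i < m, A i ∩ B i = {w i}) ∧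
      (∀ i < m, (T.induce (A i)).Connected ∧ (T.induce (B i)).Connected) := by
  obtain ⟨m, B, hm, hv, hchain, hcut⟩ := hT.connected.exists_isNestedCutChain v
  choose A w hAB hAB' hA hB using hcut
  rw [← Nat.card_eq_fintype_card]
  exact ⟨m, A, B, w, hm, hv 0, hchain, fun i _ => hAB i, fun i _ => hAB' i,
    fun i _ => ⟨hA i, hB i⟩⟩
end

section
/- For every connected graph G, P(G,2) ≥ CMC(G)/2, where P(G,2) is the number of unordered pairs (m₁, m₂) with m₁ ≥ m₂ ≥ 1, m₁ + m₂ = e(G), realizable by a partition E(G) = E₁ ∪ E₂ into two disjoint nonempty parts each inducing a connected subgraph, and CMC(G) is the maximum, over partitions V(G) = A ∪ B into two disjoint parts with G[A] and G[B] connected, of the number of edges between A and B. -/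
/-- An edge set `E` induces a connected subgraph: the graph on the endpoint of edges of
`E` whose edges are exactly `E` is connected. -/
def EdgeConn {V : Type*} (E : Set (Sym2 V)) : Prop :=
  ((SimpleGraph.fromEdgeSet E).induce (SimpleGraph.fromEdgeSet E).support).Connected

/-- The set of unordered `k`-tuples (encoded as weakly decreasing tuples) of positive
integers realizable as the part sizes of a partition of `E(G)` into `k` parts, each
inducing a connected subgraph. -/
def kEdgeTuples {V : Type*} (G : SimpleGraph V) (k : ℕ) : Set (Fin k → ℕ) :=
  {m | (∀ i, 1 ≤ m i) ∧ (∀ i j : Fin k, i ≤ j → m j ≤ m i) ∧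
    ∃ E : Fin k → Set (Sym2 V), (⋃ i, E i) = G.edgeSet ∧
      (Pairwise fun i j => Disjoint (E i) (E j)) ∧
      ∀ i, EdgeConn (E i) ∧ (E i).ncard = m i}

/-- `P G k`: the number of unordered `k`-tuples realizable by connected edge partitions. -/
noncomputable def P {V : Type*} (G : SimpleGraph V) (k : ℕ) : ℕ := (kEdgeTuples G k).ncard

/-- The set of edges of `G` crossing between `A` and its complement. -/
def cutEdges {V : Type*} (G : SimpleGraph V) (A : Set V) : Set (Sym2 V) :=
  {e | e ∈ G.edgeSet ∧ ∃ a ∈ A, ∃ b ∈ Aᶜ, e = s(a, b)}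

/-- `CMC G`: maximum size of a connected cut of `G`. -/
noncomputable def CMC {V : Type*} (G : SimpleGraph V) : ℕ :=
  sSup {m | ∃ A : Set V, A.Nonempty ∧ Aᶜ.Nonempty ∧ (G.induce A).Connected ∧
    (G.induce Aᶜ).Connected ∧ m = (cutEdges G A).ncard}

/-!
Let `(A, B)` be a connected cut with `c` crossing edges, and suppose `G[A]` has an edge. For
`0 ≤ i < c`, giving `i` of the crossing edges to the edges of `G[A]` and the other `c - i` to the
edges of `G[B]` yields a connected 2-edge-partition: each part is a connected induced subgraph
with pendant edges attached to it. Its larger part has size `max (e(A) + i) (e(B) + c - i)`,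
which determines `i` up to two choices, so these partitions realize at least `c / 2` distinct
size pairs. If neither `G[A]` nor `G[B]` has an edge, both are single vertices and `G` has at
most one edge.
-/

open SimpleGraph Set

section

variable {V : Type*}

theorem EdgeConn.nonempty {E : Set (Sym2 V)} (h : EdgeConn E) : E.Nonempty := by
  obtain ⟨⟨v, w, hvw⟩⟩ := Connected.nonempty h
  exact ⟨s(v, w), ((fromEdgeSet_adj E).mp hvw).1⟩

theorem SimpleGraph.Reachable.induce_support {H : SimpleGraph V} {u v : V}
    (h : H.Reachable u v) (hu : u ∈ H.support) (hv : v ∈ H.support) :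
    (H.induce H.support).Reachable ⟨u, hu⟩ ⟨v, hv⟩ := by
  obtain ⟨p⟩ := h
  by_cases hp : p.Nil
  · obtain rfl := hp.eq
    rfl
  · exact ⟨p.induce H.support fun x hx => mem_support_of_mem_walk_support p hp hx⟩

theorem edgeConn_of_connected_induce {G : SimpleGraph V} {C : Set V} {E : Set (Sym2 V)}
    (hC : (G.induce C).Connected) (hCE : G.edgeSet ∩ C.sym2 ⊆ E)
    (hEG : E ⊆ G.edgeSet \ Cᶜ.sym2) (hE : E.Nonempty) : EdgeConn E := by
  set H := fromEdgeSet E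
  have hreach_C : ∀ x ∈ C, ∀ y ∈ C, H.Reachable x y := by
    intro x hx y hy
    let f : G.induce C →g H :=
      ⟨(↑), fun {a b} hab => ⟨hCE ⟨hab, a.2, b.2⟩, (show G.Adj a b from hab).ne⟩⟩
    exact (hC.preconnected ⟨x, hx⟩ ⟨y, hy⟩).map f
  obtain ⟨⟨x₀, hx₀⟩⟩ := hC.nonempty
  have hreach : ∀ u ∈ H.support, H.Reachable u x₀ := by
    rintro u ⟨w, huw⟩
    by_cases hu : u ∈ C
    · exact hreach_C u hu x₀ hx₀
    · have hw : w ∈ C := by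
        by_contra hw
        exact (hEG ((fromEdgeSet_adj E).mp huw).1).2 ⟨hu, hw⟩
      exact huw.reachable.trans (hreach_C w hw x₀ hx₀)
  obtain ⟨e, he⟩ := hE
  induction e using Sym2.ind with
  | h a b =>
    have hab : H.Adj a b := (fromEdgeSet_adj E).mpr ⟨he, (G.mem_edgeSet.mp (hEG he).1).ne⟩
    refine (connected_iff _).mpr ⟨fun u v => ?_, ⟨⟨a, b, hab⟩⟩⟩
    exact ((hreach u u.2).trans (hreach v v.2).symm).induce_support u.2 v.2

theorem kEdgeTuples_finite {G : SimpleGraph V} (hfin : G.edgeSet.Finite) (k : ℕ) :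
    (kEdgeTuples G k).Finite := by
  refine (Finite.pi fun _ => finite_Iic G.edgeSet.ncard).subset ?_
  rintro m ⟨-, -, E, hE, -, hEm⟩ i -
  rw [mem_Iic, ← (hEm i).2]
  exact ncard_le_ncard (hE ▸ subset_iUnion E i) hfin

theorem exists_mem_kEdgeTuples_two {G : SimpleGraph V} (hfin : G.edgeSet.Finite)
    {E₁ E₂ : Set (Sym2 V)} (hunion : E₁ ∪ E₂ = G.edgeSet) (hdisj : Disjoint E₁ E₂)
    (h₁ : EdgeConn E₁) (h₂ : EdgeConn E₂) :
    ∃ m ∈ kEdgeTuples G 2, m 0 = max E₁.ncard E₂.ncard := by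
  wlog hle : E₂.ncard ≤ E₁.ncard generalizing E₁ E₂
  · rw [max_comm]
    exact this (by rwa [union_comm]) hdisj.symm h₂ h₁ (by omega)
  have hpos : ∀ {E}, E ⊆ G.edgeSet → EdgeConn E → 1 ≤ E.ncard := fun hE h =>
    (ncard_pos (hfin.subset hE)).mpr h.nonempty
  refine ⟨![E₁.ncard, E₂.ncard], ⟨?_, ?_, ![E₁, E₂], ?_, ?_, ?_⟩, (max_eq_left hle).symm⟩
  · simp [Fin.forall_fin_two, hpos (hunion ▸ subset_union_left) h₁,
      hpos (hunion ▸ subset_union_right) h₂]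
  · simp [Fin.forall_fin_two, hle]
  · rw [← hunion]; ext; simp [Fin.exists_fin_two]
  · intro i j hij
    fin_cases i <;> fin_cases j <;> simp_all [hdisj.symm]
  · simp [Fin.forall_fin_two, h₁, h₂]

theorem cutEdges_eq (G : SimpleGraph V) (A : Set V) :
    cutEdges G A = G.edgeSet \ (A.sym2 ∪ Aᶜ.sym2) := by
  ext e
  induction e using Sym2.ind with
  | h a b =>
    simp only [cutEdges, mem_ofPred_eq, mem_sdiff, mem_union, mk_mem_sym2_iff, mem_compl_iff,
      Sym2.eq_iff]
    by_cases ha : a ∈ A <;> by_cases hb : b ∈ A <;> aesop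

theorem cutEdges_compl (G : SimpleGraph V) (A : Set V) : cutEdges G Aᶜ = cutEdges G A := by
  rw [cutEdges_eq, cutEdges_eq, compl_compl, union_comm]

theorem disjoint_sym2_compl (A : Set V) : Disjoint A.sym2 Aᶜ.sym2 := by
  rw [disjoint_iff_inter_eq_empty, ← sym2_inter, inter_compl_self, sym2_empty]

theorem subsingleton_of_connected_induce_of_inter_sym2_eq_empty {G : SimpleGraph V} {A : Set V}
    (hA : (G.induce A).Connected) (h : G.edgeSet ∩ A.sym2 = ∅) : A.Subsingleton := by
  have hbot : G.induce A = ⊥ := by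
    ext u v
    exact iff_of_false (fun huv => h.subset (show s((u : V), v) ∈ _ from ⟨huv, u.2, v.2⟩)) id
  intro x hx y hy
  have := hA.preconnected ⟨x, hx⟩ ⟨y, hy⟩
  rw [hbot, reachable_bot] at this
  exact congrArg Subtype.val this

theorem ncard_edgeSet_le_one_of_inter_sym2_eq_empty {G : SimpleGraph V} {A : Set V}
    (hA : (G.induce A).Connected) (hB : (G.induce Aᶜ).Connected)
    (hA₀ : G.edgeSet ∩ A.sym2 = ∅) (hB₀ : G.edgeSet ∩ Aᶜ.sym2 = ∅) : G.edgeSet.ncard ≤ 1 := by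
  have hcut : G.edgeSet ⊆ cutEdges G A := by
    intro e he
    rw [cutEdges_eq]
    exact ⟨he, fun h => h.elim (fun h => hA₀.subset ⟨he, h⟩) (fun h => hB₀.subset ⟨he, h⟩)⟩
  have hsub : G.edgeSet.Subsingleton := by
    intro e he e' he'
    obtain ⟨-, a, ha, b, hb, rfl⟩ := hcut he
    obtain ⟨-, a', ha', b', hb', rfl⟩ := hcut he'
    rw [subsingleton_of_connected_induce_of_inter_sym2_eq_empty hA hA₀ ha ha',
      subsingleton_of_connected_induce_of_inter_sym2_eq_empty hB hB₀ hb hb']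
  exact (ncard_le_one hsub.finite).mpr hsub

theorem edgeConn_inter_sym2_union {G : SimpleGraph V} {A : Set V} (hA : (G.induce A).Connected)
    {S : Set (Sym2 V)} (hS : S ⊆ cutEdges G A) (hne : (G.edgeSet ∩ A.sym2 ∪ S).Nonempty) :
    EdgeConn (G.edgeSet ∩ A.sym2 ∪ S) := by
  rw [cutEdges_eq] at hS
  refine edgeConn_of_connected_induce hA subset_union_left (union_subset ?_ ?_) hne
  · exact fun e he => ⟨he.1, Set.disjoint_left.mp (disjoint_sym2_compl A) he.2⟩
  · exact hS.trans (sdiff_subset_sdiff_right subset_union_right)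

theorem ncard_inter_sym2_union {G : SimpleGraph V} (hfin : G.edgeSet.Finite) {A : Set V}
    {S : Set (Sym2 V)} (hS : S ⊆ cutEdges G A) :
    (G.edgeSet ∩ A.sym2 ∪ S).ncard = (G.edgeSet ∩ A.sym2).ncard + S.ncard := by
  rw [cutEdges_eq] at hS
  refine ncard_union_eq ?_ (hfin.subset inter_subset_left) (hfin.subset (hS.trans sdiff_subset))
  exact Set.disjoint_left.mpr fun e he heS => (hS heS).2 (Or.inl he.2)

theorem exists_mem_kEdgeTuples_of_subset_cutEdges {G : SimpleGraph V} (hfin : G.edgeSet.Finite)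
    {A : Set V} (hA : (G.induce A).Connected) (hB : (G.induce Aᶜ).Connected)
    (hA₀ : (G.edgeSet ∩ A.sym2).Nonempty) {S : Set (Sym2 V)} (hS : S ⊆ cutEdges G A)
    (hSc : S.ncard < (cutEdges G A).ncard) :
    ∃ m ∈ kEdgeTuples G 2, m 0 = max ((G.edgeSet ∩ A.sym2).ncard + S.ncard)
      ((G.edgeSet ∩ Aᶜ.sym2).ncard + ((cutEdges G A).ncard - S.ncard)) := by
  have hrest : (cutEdges G A \ S).ncard = (cutEdges G A).ncard - S.ncard :=
    ncard_sdiff hS (hfin.subset fun _ he => (hS he).1)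
  have hS' : cutEdges G A \ S ⊆ cutEdges G Aᶜ := cutEdges_compl G A ▸ sdiff_subset
  have hmem : ∀ e, (e ∈ cutEdges G A ↔ e ∈ G.edgeSet ∧ e ∉ A.sym2 ∧ e ∉ Aᶜ.sym2) ∧
      (e ∈ S → e ∈ cutEdges G A) ∧ ¬(e ∈ A.sym2 ∧ e ∈ Aᶜ.sym2) := fun e =>
    ⟨by simp [cutEdges_eq, not_or], (hS ·),
      fun h => Set.disjoint_left.mp (disjoint_sym2_compl A) h.1 h.2⟩
  have hunion : (G.edgeSet ∩ A.sym2 ∪ S) ∪ (G.edgeSet ∩ Aᶜ.sym2 ∪ (cutEdges G A \ S)) =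
      G.edgeSet := by
    ext e
    have := hmem e
    simp only [mem_union, mem_inter_iff, mem_sdiff] at this ⊢
    tauto
  have hdisj : Disjoint (G.edgeSet ∩ A.sym2 ∪ S) (G.edgeSet ∩ Aᶜ.sym2 ∪ (cutEdges G A \ S)) := by
    refine Set.disjoint_left.mpr fun e => ?_
    have := hmem e
    simp only [mem_union, mem_inter_iff, mem_sdiff] at this ⊢
    tauto
  obtain ⟨m, hm, hm0⟩ := exists_mem_kEdgeTuples_two hfin hunion hdisj
    (edgeConn_inter_sym2_union hA hS (hA₀.mono subset_union_left))
    (edgeConn_inter_sym2_union hB hS'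
      ((nonempty_of_ncard_ne_zero (by omega)).mono subset_union_right))
  refine ⟨m, hm, ?_⟩
  rw [hm0, ncard_inter_sym2_union hfin hS, ncard_inter_sym2_union hfin hS', hrest]

theorem le_two_mul_card_image_max (a b c : ℕ) :
    c ≤ 2 * ((Finset.range c).image fun i => max (a + i) (b + (c - i))).card := by
  simpa using Finset.card_le_mul_card_image (Finset.range c) 2 fun v _ => by
    calc ({i ∈ Finset.range c | max (a + i) (b + (c - i)) = v} : Finset ℕ).card
        ≤ ({v - a, c - (v - b)} : Finset ℕ).card := by
          refine Finset.card_le_card fun i hi => ?_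
          simp only [Finset.mem_filter, Finset.mem_range] at hi
          simp only [Finset.mem_insert, Finset.mem_singleton]
          omega
      _ ≤ 2 := Finset.card_le_two

theorem ncard_cutEdges_le_two_mul_P {G : SimpleGraph V} (hfin : G.edgeSet.Finite) {A : Set V}
    (hA : (G.induce A).Connected) (hB : (G.induce Aᶜ).Connected)
    (hA₀ : (G.edgeSet ∩ A.sym2).Nonempty) : (cutEdges G A).ncard ≤ 2 * P G 2 := by
  set c := (cutEdges G A).ncard
  set f := fun i => max ((G.edgeSet ∩ A.sym2).ncard + i) ((G.edgeSet ∩ Aᶜ.sym2).ncard + (c - i))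
  have hrealized : ((Finset.range c).image f : Set ℕ) ⊆ (· 0) '' kEdgeTuples G 2 := by
    simp only [Finset.coe_image, Finset.coe_range, image_subset_iff]
    intro i hi
    obtain ⟨S, hS, rfl⟩ := exists_subset_card_eq (le_of_lt hi)
    exact exists_mem_kEdgeTuples_of_subset_cutEdges hfin hA hB hA₀ hS hi
  have hfinite := kEdgeTuples_finite hfin 2
  calc c ≤ 2 * ((Finset.range c).image f).card := le_two_mul_card_image_max _ _ _
    _ ≤ 2 * ((· 0) '' kEdgeTuples G 2).ncard := by
      rw [← ncard_coe_finset]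
      exact Nat.mul_le_mul_left 2 (ncard_le_ncard hrealized (hfinite.image _))
    _ ≤ 2 * P G 2 := Nat.mul_le_mul_left 2 (ncard_image_le hfinite)

end

theorem P_ge_CMC_div_two_general {V : Type*} (G : SimpleGraph V) (he : 2 ≤ G.edgeSet.ncard) :
    (P G 2 : ℝ) ≥ (CMC G : ℝ) / 2 := by
  have hfin : G.edgeSet.Finite := finite_of_ncard_pos (by omega)
  have hCMC : CMC G ≤ 2 * P G 2 := by
    refine csSup_le' ?_
    rintro _ ⟨A, -, -, hA, hB, rfl⟩
    rcases (G.edgeSet ∩ A.sym2).eq_empty_or_nonempty with hA₀ | hA₀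
    · rcases (G.edgeSet ∩ Aᶜ.sym2).eq_empty_or_nonempty with hB₀ | hB₀
      · have := ncard_edgeSet_le_one_of_inter_sym2_eq_empty hA hB hA₀ hB₀
        omega
      · rw [← cutEdges_compl]
        exact ncard_cutEdges_le_two_mul_P hfin hB (by rwa [compl_compl]) hB₀
    · exact ncard_cutEdges_le_two_mul_P hfin hA hB hA₀
  have : (CMC G : ℝ) ≤ 2 * P G 2 := by exact_mod_cast hCMC
  linarith

/-- for every finite connected graph `G` (with at least two edges),
`P(G,2) ≥ CMC(G)/2`. -/
theorem P_ge_CMC_div_two {V : Type*} [Fintype V] (G : SimpleGraph V)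
    (hG : G.Connected) (he : 2 ≤ G.edgeSet.ncard) :
    (P G 2 : ℝ) ≥ (CMC G : ℝ) / 2 :=
  P_ge_CMC_div_two_general G he
end

section
/- Every connected graph G with average degree d = 2e(G)/n(G) contains two vertex-disjoint nonempty sets A, B with V(G) = A ⊔ B, both G[A] and G[B] connected, and with at least d²/64 edges between A and B whenever d ≥ 8; in particular CMC(G) = Ω(d²). -/
open Finset

theorem Finset.add_one_mul_card_le_sum_add {ι : Type*} (s : Finset ι) (f : ι → ℕ) (t : ℕ) :
    (t + 1) * #s ≤ ∑ i ∈ s, f i + (t + 1) * #{i ∈ s | f i ≤ t} := by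
  have hlarge : #{i ∈ s | ¬f i ≤ t} * (t + 1) ≤ ∑ i ∈ s, f i :=
    calc _ ≤ ∑ i ∈ s with ¬f i ≤ t, f i :=
          card_nsmul_le_sum _ _ _ fun i hi => by simp only [mem_filter] at hi; omega
      _ ≤ _ := sum_le_sum_of_subset (filter_subset _ _)
  have hsplit := card_filter_add_card_filter_not (s := s) (fun i => f i ≤ t)
  nlinarith

theorem List.getD_length_sub_of_suffix {α : Type*} {l₁ l₂ : List α} {a : α}
    (hs : l₁ <:+ l₂) (hhead : l₁.head? = some a) (d : α) : l₂.getD (l₂.length - l₁.length) d = a := by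
  obtain ⟨l, rfl⟩ := hs
  simp [List.getD_eq_getElem?_getD, List.getElem?_append_right, ← List.head?_eq_getElem?,
    hhead]

namespace SimpleGraph

variable {V : Type*} {G : SimpleGraph V} {r : V} {A : V → List V}

/-- A rooted spanning tree of `G` given by its ancestor lists: `A v` is the tree path from `v`
up to the root `r`. It is *normal* when the ends of every edge of `G` are comparable in the
tree order, i.e. one ancestor list is a suffix of the other. -/
structure IsNormalSpanningTree (G : SimpleGraph V) (r : V) (A : V → List V) : Prop where
  root : A r = [r]
  exists_parent : ∀ v, v ≠ r → ∃ p, G.Adj p v ∧ A v = v :: A p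
  suffix_or_suffix_of_adj : ∀ ⦃u v⦄, G.Adj u v → A u <:+ A v ∨ A v <:+ A u

namespace IsNormalSpanningTree

variable (h : G.IsNormalSpanningTree r A)
include h

theorem induction {P : V → Prop} (root : P r)
    (parent : ∀ v p, G.Adj p v → A v = v :: A p → P p → P v) (v : V) : P v := by
  induction hn : (A v).length using Nat.strong_induction_on generalizing v with
  | _ n ih =>
    by_cases hv : v = r
    · exact hv ▸ root
    obtain ⟨p, hp, hA⟩ := h.exists_parent v hv
    exact parent v p hp hA (ih _ (by simp [← hn, hA]) p rfl)

theorem head?_eq (v : V) : (A v).head? = some v := by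
  induction v using h.induction with
  | root => simp [h.root]
  | parent v p _ hA _ => simp [hA]

theorem injective : Function.Injective A := fun u v huv =>
  Option.some_injective _ ((h.head?_eq u).symm.trans (huv ▸ h.head?_eq v))

theorem root_mem (v : V) : r ∈ A v := by
  induction v using h.induction with
  | root => simp [h.root]
  | parent v p _ hA hp => simp [hA, hp]

theorem suffix_of_mem {u v : V} (hu : u ∈ A v) : A u <:+ A v := by
  induction v using h.induction with
  | root => rw [h.root, List.mem_singleton] at hu; rw [hu]
  | parent v p _ hA ih =>
    rw [hA] at hu ⊢
    rcases List.mem_cons.mp hu with rfl | hu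
    · rw [hA]
    · exact (ih hu).trans (List.suffix_cons _ _)

theorem nodup (v : V) : (A v).Nodup := by
  induction v using h.induction with
  | root => simp [h.root]
  | parent v p _ hA ih =>
    rw [hA, List.nodup_cons]
    refine ⟨fun hv => ?_, ih⟩
    have := (h.suffix_of_mem hv).length_le
    simp [hA] at this

theorem length_lt_of_adj {u v : V} (huv : G.Adj u v) (hs : A u <:+ A v) :
    (A u).length < (A v).length :=
  lt_of_le_of_ne hs.length_le fun hl => huv.ne (h.injective (hs.eq_of_length hl))

end IsNormalSpanningTree

section DFS

variable {S : Finset V} {c : V}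

/-- A depth-first search from `r` that has visited `S` and stands at `c`: the last field says
that the current path `A c` is the DFS stack. -/
structure DFSInvariant (G : SimpleGraph V) (r : V) (S : Finset V) (A : V → List V) (c : V) :
    Prop where
  root_mem : r ∈ S
  root : A r = [r]
  exists_parent : ∀ v ∈ S, v ≠ r → ∃ p ∈ S, G.Adj p v ∧ A v = v :: A p
  suffix_or_suffix_of_adj : ∀ u ∈ S, ∀ v ∈ S, G.Adj u v → A u <:+ A v ∨ A v <:+ A u
  ancestor : ∀ v ∈ S, ∀ u ∈ A v, u ∈ S ∧ A u <:+ A v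
  current_mem : c ∈ S
  mem_current_of_adj : ∀ u ∈ S, ∀ w ∉ S, G.Adj u w → u ∈ A c

namespace DFSInvariant

theorem start (r : V) : DFSInvariant G r {r} (fun _ => [r]) r where
  root_mem := mem_singleton_self r
  root := rfl
  exists_parent v hv hvr := absurd (mem_singleton.mp hv) hvr
  suffix_or_suffix_of_adj _ _ _ _ _ := Or.inl List.suffix_rfl
  ancestor v hv u hu := by simp_all
  current_mem := mem_singleton_self r
  mem_current_of_adj u hu _ _ _ := by simp_all

variable (inv : DFSInvariant G r S A c)
include inv

theorem visit [DecidableEq V] {w : V} (hw : w ∉ S) (hcw : G.Adj c w) :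
    DFSInvariant G r (insert w S) (Function.update A w (w :: A c)) w := by
  have hA : ∀ v ∈ S, Function.update A w (w :: A c) v = A v := fun v hv =>
    Function.update_of_ne (ne_of_mem_of_not_mem hv hw) _ _
  have hAw : Function.update A w (w :: A c) w = w :: A c := Function.update_self _ _ _
  have hstack : ∀ v ∈ S, G.Adj v w → A v <:+ w :: A c := fun v hv hvw =>
    (inv.ancestor c inv.current_mem v (inv.mem_current_of_adj v hv w hw hvw)).2.trans
      (List.suffix_cons _ _)
  refine ⟨mem_insert_of_mem inv.root_mem, by rw [hA r inv.root_mem, inv.root], ?_, ?_, ?_,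
    mem_insert_self _ _, ?_⟩
  · intro v hv hvr
    rcases mem_insert.mp hv with rfl | hv
    · exact ⟨c, mem_insert_of_mem inv.current_mem, hcw, by rw [hAw, hA c inv.current_mem]⟩
    · obtain ⟨p, hp, hpv, hAv⟩ := inv.exists_parent v hv hvr
      exact ⟨p, mem_insert_of_mem hp, hpv, by rw [hA v hv, hA p hp, hAv]⟩
  · intro u hu v hv huv
    rcases mem_insert.mp hu with rfl | hu' <;> rcases mem_insert.mp hv with rfl | hv'
    · exact absurd rfl huv.ne
    · exact Or.inr (by rw [hAw, hA v hv']; exact hstack v hv' huv.symm)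
    · exact Or.inl (by rw [hAw, hA u hu']; exact hstack u hu' huv)
    · rw [hA u hu', hA v hv']; exact inv.suffix_or_suffix_of_adj u hu' v hv' huv
  · intro v hv u huv
    rcases mem_insert.mp hv with rfl | hv
    · rw [hAw] at huv ⊢
      rcases List.mem_cons.mp huv with rfl | huc
      · exact ⟨mem_insert_self _ _, by rw [hAw]⟩
      · obtain ⟨hu, hsuf⟩ := inv.ancestor c inv.current_mem u huc
        exact ⟨mem_insert_of_mem hu, by rw [hA u hu]; exact hsuf.trans (List.suffix_cons _ _)⟩
    · rw [hA v hv] at huv ⊢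
      obtain ⟨hu, hsuf⟩ := inv.ancestor v hv u huv
      exact ⟨mem_insert_of_mem hu, by rw [hA u hu]; exact hsuf⟩
  · intro u hu x hx hux
    rw [hAw]
    rcases mem_insert.mp hu with rfl | hu
    · exact List.mem_cons_self
    · exact List.mem_cons_of_mem _
        (inv.mem_current_of_adj u hu x (fun h => hx (mem_insert_of_mem h)) hux)

theorem backtrack (hc : ∀ w ∉ S, ¬G.Adj c w) {p : V} (hp : p ∈ S) (hA : A c = c :: A p) :
    DFSInvariant G r S A p :=
  { inv with
    current_mem := hp
    mem_current_of_adj := fun u hu w hw huw => by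
      have hu' := inv.mem_current_of_adj u hu w hw huw
      rw [hA] at hu'
      rcases List.mem_cons.mp hu' with rfl | hu'
      · exact absurd huw (hc w hw)
      · exact hu' }

theorem isNormalSpanningTree (hS : ∀ v, v ∈ S) : G.IsNormalSpanningTree r A where
  root := inv.root
  exists_parent v hv :=
    let ⟨p, _, hpv, hA⟩ := inv.exists_parent v (hS v) hv
    ⟨p, hpv, hA⟩
  suffix_or_suffix_of_adj u v huv := inv.suffix_or_suffix_of_adj u (hS u) v (hS v) huv

end DFSInvariant

theorem DFSInvariant.mem_of_preconnected (inv : DFSInvariant G r S A r) (hG : G.Preconnected)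
    (hr : ∀ w ∉ S, ¬G.Adj r w) (v : V) : v ∈ S := by
  by_contra hv
  obtain ⟨d, -, hd, hd'⟩ := (hG r v).some.exists_boundary_dart (↑S) inv.root_mem hv
  have hroot := inv.mem_current_of_adj _ hd _ hd' d.adj
  rw [inv.root, List.mem_singleton] at hroot
  exact hr _ hd' (hroot ▸ d.adj)

/-- The search backtracks along the stack until it reaches a vertex with an unvisited
neighbour; connectivity prevents it from getting stuck at the root. -/
theorem DFSInvariant.exists_card_lt [DecidableEq V] (inv : DFSInvariant G r S A c)
    (hG : G.Preconnected) (hS : ∃ v, v ∉ S) :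
    ∃ S' A' c', DFSInvariant G r S' A' c' ∧ #S < #S' := by
  induction hn : (A c).length using Nat.strong_induction_on generalizing c with
  | _ n ih =>
  by_cases hc : ∃ w ∉ S, G.Adj c w
  · obtain ⟨w, hw, hcw⟩ := hc
    exact ⟨_, _, _, inv.visit hw hcw, card_lt_card (ssubset_insert hw)⟩
  push Not at hc
  by_cases hcr : c = r
  · subst hcr
    obtain ⟨v, hv⟩ := hS
    exact absurd (inv.mem_of_preconnected hG hc v) hv
  obtain ⟨p, hp, -, hA⟩ := inv.exists_parent c inv.current_mem hcr
  exact ih _ (by simp [← hn, hA]) (inv.backtrack hc hp hA) rfl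

theorem Connected.exists_isNormalSpanningTree [Fintype V] (hG : G.Connected) (r : V) :
    ∃ A, G.IsNormalSpanningTree r A := by
  classical
  suffices ∀ S A c, DFSInvariant G r S A c → ∃ A, G.IsNormalSpanningTree r A from
    this _ _ _ (DFSInvariant.start r)
  intro S
  induction hn : Fintype.card V - #S using Nat.strong_induction_on generalizing S with
  | _ n ih =>
  intro A c inv
  by_cases hS : ∀ v, v ∈ S
  · exact ⟨A, inv.isNormalSpanningTree hS⟩
  push Not at hS
  obtain ⟨S', A', c', inv', hlt⟩ := inv.exists_card_lt hG.preconnected hS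
  exact ih _ (by have := card_le_univ S'; omega) S' rfl A' c' inv'

end DFS

def subtree (A : V → List V) (v : V) : Set V := {w | v ∈ A w}

namespace IsNormalSpanningTree

variable (h : G.IsNormalSpanningTree r A)
include h

theorem cutEdges_subtree_root : cutEdges G (subtree A r) = ∅ := by
  simp [cutEdges, subtree, h.root_mem]

theorem root_notMem_subtree {v : V} (hv : v ≠ r) : r ∉ subtree A v := by
  simpa [subtree, h.root] using hv

theorem mem_subtree_self (v : V) : v ∈ subtree A v :=
  List.mem_of_mem_head? (h.head?_eq v)

theorem induce_subtree_connected (v : V) : (G.induce (subtree A v)).Connected := by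
  have hv := h.mem_subtree_self v
  have reach : ∀ w (hw : w ∈ subtree A v),
      (G.induce (subtree A v)).Reachable ⟨w, hw⟩ ⟨v, hv⟩ := by
    intro w
    induction w using h.induction with
    | root =>
      intro hw
      obtain rfl : v = r := by simpa [subtree, h.root] using hw
      rfl
    | parent w p hpw hA ih =>
      intro hw
      by_cases hwv : w = v
      · subst hwv; rfl
      have hp : p ∈ subtree A v := by
        simpa [subtree, hA, Ne.symm hwv] using hw
      exact (Adj.reachable (by simpa using hpw.symm)).trans (ih hp)
  exact (connected_iff_exists_forall_reachable _).mpr ⟨⟨v, hv⟩, fun w => (reach _ w.2).symm⟩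

theorem induce_compl_subtree_connected {v : V} (hv : v ≠ r) :
    (G.induce (subtree A v)ᶜ).Connected := by
  have hr := h.root_notMem_subtree hv
  have reach : ∀ w (hw : w ∈ (subtree A v)ᶜ),
      (G.induce (subtree A v)ᶜ).Reachable ⟨w, hw⟩ ⟨r, hr⟩ := by
    intro w
    induction w using h.induction with
    | root => intro _; rfl
    | parent w p hpw hA ih =>
      intro hw
      have hp : p ∈ (subtree A v)ᶜ := fun hp => hw (by simp [subtree, hA, hp.out])
      exact (Adj.reachable (by simpa using hpw.symm)).trans (ih hp)
  exact (connected_iff_exists_forall_reachable _).mpr ⟨⟨r, hr⟩, fun w => (reach _ w.2).symm⟩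

end IsNormalSpanningTree

theorem mk_mem_cutEdges_subtree_iff_of_suffix {x y : V} (hxy : G.Adj x y) (hs : A x <:+ A y)
    (v : V) :
    s(x, y) ∈ cutEdges G (subtree A v) ↔ v ∈ A y ∧ v ∉ A x := by
  simp only [cutEdges, subtree, Set.mem_ofPred_eq, Set.mem_compl_iff, mem_edgeSet, hxy, true_and,
    Sym2.eq_iff]
  constructor
  · rintro ⟨a, ha, b, hb, ⟨rfl, rfl⟩ | ⟨rfl, rfl⟩⟩
    · exact absurd (hs.subset ha) hb
    · exact ⟨ha, hb⟩
  · exact fun ⟨hy, hx⟩ => ⟨y, hy, x, hx, Or.inr ⟨rfl, rfl⟩⟩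

open Classical in
theorem ncard_cutEdges [Fintype V] [DecidableRel G.Adj] (S : Set V) :
    (cutEdges G S).ncard = #{e ∈ G.edgeFinset | e ∈ cutEdges G S} := by
  rw [← Set.ncard_coe_finset, coe_filter]
  congr 1
  ext e
  simp only [Set.mem_ofPred_eq, mem_edgeFinset]
  exact ⟨fun he => ⟨he.1, he⟩, And.right⟩

variable (G) in
open Classical in
noncomputable def subtreeCutCount [Fintype V] (A : V → List V) (e : Sym2 V) : ℕ :=
  #{v | e ∈ cutEdges G (subtree A v)}

namespace IsNormalSpanningTree

variable [Fintype V] (h : G.IsNormalSpanningTree r A)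
include h

theorem subtreeCutCount_eq {x y : V} (hxy : G.Adj x y) (hs : A x <:+ A y) :
    subtreeCutCount G A s(x, y) = (A y).length - (A x).length := by
  classical
  have hset : ({v | s(x, y) ∈ cutEdges G (subtree A v)} : Finset V) =
      (A y).toFinset \ (A x).toFinset := by
    ext v
    simp [mk_mem_cutEdges_subtree_iff_of_suffix hxy hs]
  have hsub : (A x).toFinset ⊆ (A y).toFinset := fun v hv =>
    List.mem_toFinset.mpr (hs.subset (List.mem_toFinset.mp hv))
  rw [subtreeCutCount, hset, card_sdiff_of_subset hsub, List.toFinset_card_of_nodup (h.nodup y),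
    List.toFinset_card_of_nodup (h.nodup x)]

theorem card_filter_subtreeCutCount_le [DecidableRel G.Adj] (t : ℕ) :
    #{e ∈ G.edgeFinset | subtreeCutCount G A e ≤ t} ≤ Fintype.card V * t := by
  classical
  -- an edge is determined by its lower end `y` and the depth gap `k`: its upper end is `(A y)[k]`
  let edgeOf : V × ℕ → Sym2 V := fun p => s(p.1, (A p.1).getD p.2 p.1)
  have key : ∀ x y, G.Adj x y → A x <:+ A y → subtreeCutCount G A s(x, y) ≤ t →
      s(x, y) ∈ (univ ×ˢ Icc 1 t).image edgeOf := by
    intro x y hxy hs ht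
    rw [h.subtreeCutCount_eq hxy hs] at ht
    have hlt := h.length_lt_of_adj hxy hs
    refine mem_image.mpr ⟨(y, (A y).length - (A x).length),
      mem_product.mpr ⟨mem_univ _, mem_Icc.mpr ⟨by omega, ht⟩⟩, ?_⟩
    simp only [edgeOf, List.getD_length_sub_of_suffix hs (h.head?_eq x), Sym2.eq_swap]
  calc _ ≤ #((univ ×ˢ Icc 1 t).image edgeOf) := card_le_card ?_
    _ ≤ #(univ ×ˢ Icc 1 t) := card_image_le
    _ = Fintype.card V * t := by simp
  intro e he
  induction e using Sym2.ind with
  | _ x y =>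
    simp only [mem_filter, mem_edgeFinset, mem_edgeSet] at he
    rcases h.suffix_or_suffix_of_adj he.1 with hs | hs
    · exact key x y he.1 hs he.2
    · rw [Sym2.eq_swap] at he ⊢
      exact key y x he.1.symm hs he.2

theorem add_one_mul_card_edgeFinset_le [DecidableRel G.Adj] (t : ℕ) :
    (t + 1) * #G.edgeFinset ≤
      ∑ v, (cutEdges G (subtree A v)).ncard + (t + 1) * (Fintype.card V * t) := by
  classical
  have hsum : ∑ v, (cutEdges G (subtree A v)).ncard =
      ∑ e ∈ G.edgeFinset, subtreeCutCount G A e := by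
    simp only [ncard_cutEdges, subtreeCutCount]
    exact sum_card_bipartiteAbove_eq_sum_card_bipartiteBelow _
  calc _ ≤ _ := G.edgeFinset.add_one_mul_card_le_sum_add (subtreeCutCount G A) t
    _ ≤ _ := by rw [hsum]; gcongr; exact h.card_filter_subtreeCutCount_le t

theorem exists_add_one_mul_card_edgeFinset_le [DecidableRel G.Adj] [Nonempty V] (t : ℕ) :
    ∃ v, (t + 1) * #G.edgeFinset ≤
      Fintype.card V * (cutEdges G (subtree A v)).ncard + (t + 1) * (Fintype.card V * t) := by
  obtain ⟨v, -, hv⟩ := exists_max_image univ (fun v => (cutEdges G (subtree A v)).ncard)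
    univ_nonempty
  refine ⟨v, (h.add_one_mul_card_edgeFinset_le t).trans (Nat.add_le_add_right ?_ _)⟩
  simpa using sum_le_card_nsmul univ _ _ fun w _ => hv w (mem_univ w)

end IsNormalSpanningTree

end SimpleGraph

/-- every finite connected graph `G` with average degree
`d = 2e(G)/n(G) ≥ 8` contains a partition `V(G) = A ⊔ Aᶜ` into nonempty parts, both
inducing connected subgraphs, with at least `d²/64` crossing edges; in particular
`CMC(G) = Ω(d²)`. -/
theorem connected_cut_ge_avg_deg_sq {V : Type*} [Fintype V] (G : SimpleGraph V)
    (hG : G.Connected)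
    (d : ℝ) (hd : d = 2 * (G.edgeSet.ncard : ℝ) / (Fintype.card V : ℝ))
    (hd8 : 8 ≤ d) :
    ∃ A : Set V, A.Nonempty ∧ Aᶜ.Nonempty ∧
      (G.induce A).Connected ∧ (G.induce Aᶜ).Connected ∧
      d ^ 2 / 64 ≤ ((cutEdges G A).ncard : ℝ) := by
  classical
  have : Nonempty V := hG.nonempty
  let r : V := Classical.arbitrary V
  obtain ⟨A, hA⟩ := hG.exists_isNormalSpanningTree r
  -- `t = ⌊d / 4⌋` nearly maximizes `(t + 1) (m - n t)`
  set t := ⌊d / 4⌋₊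
  obtain ⟨v, hv⟩ := hA.exists_add_one_mul_card_edgeFinset_le t
  set n := Fintype.card V
  set c := (cutEdges G (SimpleGraph.subtree A v)).ncard
  have hn : (0 : ℝ) < n := by exact_mod_cast Fintype.card_pos
  have hm : (#G.edgeFinset : ℝ) = d * n / 2 := by
    rw [hd, ← SimpleGraph.coe_edgeFinset, Set.ncard_coe_finset]; field_simp
  have ht : (t : ℝ) ≤ d / 4 := Nat.floor_le (by linarith)
  have ht' : d / 4 < t + 1 := Nat.lt_floor_add_one _
  have hcut : d ^ 2 / 16 ≤ (c : ℝ) := by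
    have hv' : ((t + 1) * #G.edgeFinset : ℝ) ≤ n * c + (t + 1) * (n * t) := by exact_mod_cast hv
    have h1 : (n : ℝ) * ((t + 1) * (d / 2 - t)) ≤ n * c := by rw [hm] at hv'; linarith
    nlinarith [le_of_mul_le_mul_left h1 hn]
  have hvr : v ≠ r := by
    rintro rfl
    simp only [c, hA.cutEdges_subtree_root, Set.ncard_empty, Nat.cast_zero] at hcut
    nlinarith
  exact ⟨SimpleGraph.subtree A v, ⟨v, hA.mem_subtree_self v⟩,
    ⟨r, hA.root_notMem_subtree hvr⟩, hA.induce_subtree_connected v,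
    hA.induce_compl_subtree_connected hvr, by linarith [sq_nonneg d]⟩
end

section
/- Let G be a connected graph on n vertices with average degree d, and fix k ≥ 2. Then π(G,k) ≥ (1/k!)·⌊d/(4(k−1))⌋^{k−1}, where π(G,k) is the number of unordered k-tuples (n₁ ≥ n₂ ≥ ⋯ ≥ n_k ≥ 1) with Σ n_i = n for which there exists a partition V(G) = V₁ ⊔ ⋯ ⊔ V_k with |V_i| = n_i and each G[V_i] connected. -/
/-- The set of unordered `k`-tuples (encoded as weakly decreasing tuples) of positive
integers realizable as the part sizes of a partition of `V(G)` into `k` parts, each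
inducing a connected subgraph. -/
def kVertexTuples {V : Type*} (G : SimpleGraph V) (k : ℕ) : Set (Fin k → ℕ) :=
  {a | (∀ i, 1 ≤ a i) ∧ (∀ i j : Fin k, i ≤ j → a j ≤ a i) ∧
    ∃ Pa : Fin k → Set V, (⋃ i, Pa i) = Set.univ ∧
      (Pairwise fun i j => Disjoint (Pa i) (Pa j)) ∧
      ∀ i, (G.induce (Pa i)).Connected ∧ (Pa i).ncard = a i}

/-- `piG G k`: the number of unordered `k`-tuples realizable by connected vertex
partitions. -/
noncomputable def piG {V : Type*} (G : SimpleGraph V) (k : ℕ) : ℕ :=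
  (kVertexTuples G k).ncard

/-!
A graph of average degree `d` has a subgraph of minimum degree at least `q = (k - 1) t`, where
`t = ⌊d / (4 (k - 1))⌋`, hence a path `p₀ … p_q`. Extend it to a spanning tree rooted at `p_q`
in which `p_{i+1}` is the parent of `p_i`, and write `D(x)` for the subtree below `x`. For cut
indices `a₁ < ⋯ < a_{k-1} < q` the successive differences of the chain
`∅ ⊂ D(p_{a₁}) ⊂ ⋯ ⊂ D(p_{a_{k-1}}) ⊂ D(p_q) = V` are connected, so they form a connected
partition into `k` parts, and its part sizes determine the cuts because `|D(p_a)|` is strictly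
increasing in `a`. Taking one cut in each of the `k - 1` blocks `[j t, (j + 1) t)` gives
`t ^ (k - 1)` distinct size tuples, and at most `k!` of them are rearrangements of the same
unordered tuple.
-/
open Finset Function
open scoped Nat

theorem card_le_factorial_mul_ncard_of_comp_perm_mem {ι α : Type*} [Fintype ι] {k : ℕ}
    {u : ι → Fin k → α} (hu : Injective u) (π : ι → Equiv.Perm (Fin k))
    {S : Set (Fin k → α)} (hS : S.Finite) (hmem : ∀ i, u i ∘ π i ∈ S) :
    Fintype.card ι ≤ k ! * S.ncard := by
  classical
  rw [Set.ncard_eq_toFinset_card S hS, ← Finset.card_univ]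
  refine card_le_mul_card_image_of_maps_to (f := fun i => u i ∘ π i)
    (fun i _ => hS.mem_toFinset.mpr (hmem i)) _ fun b _ => ?_
  calc #{i | u i ∘ π i = b} ≤ #(univ : Finset (Equiv.Perm (Fin k))) := by
        refine card_le_card_of_injOn π (fun _ _ => mem_univ _) fun i hi j hj hij => hu ?_
        simp only [coe_filter, mem_univ, true_and, Set.mem_ofPred_eq] at hi hj
        rw [← hj, hij] at hi
        exact (π j).surjective.injective_comp_right hi
    _ = k ! := by simp [Fintype.card_perm]

section Partition

variable {V : Type*} (G : SimpleGraph V) {k : ℕ}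

theorem kVertexTuples_finite [Finite V] : (kVertexTuples G k).Finite := by
  refine (Set.Finite.pi fun _ : Fin k => Set.finite_Iic (Nat.card V)).subset ?_
  rintro a ⟨-, -, P, -, -, hP⟩ i -
  exact (hP i).2 ▸ Set.ncard_le_card (P i)

theorem exists_perm_comp_mem_kVertexTuples [Finite V] {P : Fin k → Set V}
    (hcover : ⋃ i, P i = Set.univ) (hdisj : Pairwise (Disjoint on P))
    (hconn : ∀ i, (G.induce (P i)).Connected) :
    ∃ σ : Equiv.Perm (Fin k), (fun i => (P i).ncard) ∘ σ ∈ kVertexTuples G k := by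
  set u : Fin k → ℕ := fun i => (P i).ncard
  refine ⟨Fin.revPerm.trans (Tuple.sort u), fun i => ?_, fun i j hij => ?_,
    P ∘ Fin.revPerm.trans (Tuple.sort u), ?_, hdisj.comp_of_injective (Equiv.injective _),
    fun i => ⟨hconn _, rfl⟩⟩
  · obtain ⟨⟨v, hv⟩⟩ := (hconn (Fin.revPerm.trans (Tuple.sort u) i)).nonempty
    exact (Set.ncard_pos).2 ⟨v, hv⟩
  · exact Tuple.monotone_sort u (Fin.rev_anti hij)
  · rw [← hcover]
    exact (Equiv.surjective _).iUnion_comp P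

noncomputable def chainPartSizes (c : ℕ → Set V) (k : ℕ) : Fin k → ℕ :=
  fun i => (c (i + 1) \ c i).ncard

variable {c : ℕ → Set V}

theorem iUnion_sdiff_succ_eq (hc : Monotone c) :
    ⋃ i : Fin k, (c (i + 1) \ c i) = c k \ c 0 := by
  classical
  refine subset_antisymm (Set.iUnion_subset fun i => ?_) fun v ⟨hvk, hv0⟩ => ?_
  · exact Set.sdiff_subset_sdiff (hc (by omega)) (hc (Nat.zero_le _))
  · have hex : ∃ n, v ∈ c n := ⟨k, hvk⟩
    have hpos : Nat.find hex ≠ 0 := fun h => hv0 (h ▸ Nat.find_spec hex)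
    have hle : Nat.find hex ≤ k := Nat.find_min' hex hvk
    refine Set.mem_iUnion.2 ⟨⟨Nat.find hex - 1, by omega⟩, ?_, ?_⟩
    · simpa [Nat.sub_add_cancel (Nat.pos_of_ne_zero hpos)] using Nat.find_spec hex
    · exact Nat.find_min hex (show Nat.find hex - 1 < Nat.find hex by omega)

theorem pairwise_disjoint_sdiff_succ (hc : Monotone c) :
    Pairwise (Disjoint on fun i : ℕ => c (i + 1) \ c i) := by
  have key : ∀ i j, i < j → Disjoint (c (i + 1) \ c i) (c (j + 1) \ c j) := fun i j hij =>
    (disjoint_sdiff_self_right.mono_left (hc (show i + 1 ≤ j by omega))).mono_left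
      Set.sdiff_subset
  intro i j hij
  rcases lt_or_gt_of_ne hij with h | h
  exacts [key i j h, (key j i h).symm]

theorem exists_perm_comp_chainPartSizes_mem_kVertexTuples [Finite V] (hc : Monotone c)
    (h0 : c 0 = ∅) (hk : c k = Set.univ)
    (hconn : ∀ i < k, (G.induce (c (i + 1) \ c i)).Connected) :
    ∃ σ : Equiv.Perm (Fin k), chainPartSizes c k ∘ σ ∈ kVertexTuples G k :=
  exists_perm_comp_mem_kVertexTuples G (P := fun i : Fin k => c (i + 1) \ c i)
    (by rw [iUnion_sdiff_succ_eq hc, h0, hk, Set.sdiff_empty])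
    ((pairwise_disjoint_sdiff_succ hc).comp_of_injective Fin.val_injective)
    fun i => hconn i i.isLt

end Partition

theorem Set.ncard_eq_sum_ncard_sdiff_succ {α : Type*} [Finite α] {c : ℕ → Set α}
    (hc : Monotone c) (h0 : c 0 = ∅) (n : ℕ) :
    (c n).ncard = ∑ i ∈ Finset.range n, (c (i + 1) \ c i).ncard := by
  induction n with
  | zero => simp [h0]
  | succ n ih =>
    rw [Finset.sum_range_succ, ← ih, add_comm (c n).ncard,
      Set.ncard_sdiff_add_ncard_of_subset (hc n.le_succ)]

section ParentMap

variable {V : Type*}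

/-- `f` is the parent map of a spanning tree of `G` rooted at `r`. -/
structure SimpleGraph.IsParentMap (G : SimpleGraph V) (f : V → V) (r : V) : Prop where
  map_root : f r = r
  adj_map : ∀ v, v ≠ r → G.Adj v (f v)
  exists_iterate_eq_root : ∀ v, ∃ n, f^[n] v = r

def descendants (f : V → V) (x : V) : Set V := {v | ∃ n, f^[n] v = x}

variable {f : V → V} {x y : V}

theorem self_mem_descendants : x ∈ descendants f x := ⟨0, rfl⟩

theorem descendants_subset (h : x ∈ descendants f y) : descendants f x ⊆ descendants f y := by
  rintro v ⟨n, rfl⟩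
  obtain ⟨m, rfl⟩ := h
  exact ⟨m + n, Function.iterate_add_apply f m n v⟩

theorem mem_descendants_of_apply_mem {v : V} (h : f v ∈ descendants f x) :
    v ∈ descendants f x := by
  obtain ⟨n, hn⟩ := h
  exact ⟨n + 1, hn⟩

namespace SimpleGraph.IsParentMap

variable {G : SimpleGraph V} {r : V}

theorem descendants_root (hf : G.IsParentMap f r) : descendants f r = Set.univ :=
  Set.eq_univ_of_forall hf.exists_iterate_eq_root

theorem eq_root_of_isPeriodicPt (hf : G.IsParentMap f r) {p : ℕ} (hp : 0 < p)
    (hx : f.IsPeriodicPt p x) : x = r := by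
  obtain ⟨N, hN⟩ := hf.exists_iterate_eq_root x
  calc x = f^[p * N - N] (f^[N] x) := by
        rw [← Function.iterate_add_apply, Nat.sub_add_cancel (Nat.le_mul_of_pos_left N hp)]
        exact (hx.mul_const N).symm
    _ = r := by rw [hN, Function.iterate_fixed hf.map_root]

theorem eq_of_mem_descendants (hf : G.IsParentMap f r) (hxy : x ∈ descendants f y)
    (hyx : y ∈ descendants f x) : x = y := by
  obtain ⟨m, rfl⟩ := hxy
  obtain ⟨n, hn⟩ := hyx
  rcases Nat.eq_zero_or_pos (n + m) with h | h
  · simp [show m = 0 by omega]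
  have hx : x = r := hf.eq_root_of_isPeriodicPt h (by
    rw [Function.IsPeriodicPt, Function.IsFixedPt, Function.iterate_add_apply, hn])
  rw [hx, Function.iterate_fixed hf.map_root]

theorem connected_induce_descendants_sdiff (hf : G.IsParentMap f r) {T : Set V} (hxT : x ∉ T)
    (hT : ∀ v, f v ∈ T → v ∈ T) : (G.induce (descendants f x \ T)).Connected := by
  set D := descendants f x \ T
  have hxD : x ∈ D := ⟨self_mem_descendants, hxT⟩
  suffices h :
      ∀ n v (hv : v ∈ D), f^[n] v = x → (G.induce D).Reachable ⟨v, hv⟩ ⟨x, hxD⟩ from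
    (connected_iff_exists_forall_reachable _).2
      ⟨⟨x, hxD⟩, fun ⟨v, hv⟩ => (h _ v hv hv.1.choose_spec).symm⟩
  intro n
  induction n with
  | zero => rintro v hv rfl; rfl
  | succ n ih =>
    intro v hv hn
    by_cases hvx : v = x
    · subst hvx; rfl
    have hvr : v ≠ r := by
      rintro rfl
      exact hvx (by rwa [Function.iterate_fixed hf.map_root] at hn)
    have hfv : f v ∈ D := ⟨⟨n, hn⟩, fun h => hv.2 (hT v h)⟩
    have hadj : (G.induce D).Adj ⟨v, hv⟩ ⟨f v, hfv⟩ := hf.adj_map v hvr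
    exact hadj.reachable.trans (ih (f v) hfv hn)

end SimpleGraph.IsParentMap

end ParentMap

theorem Function.iterate_eq_of_apply_eq_succ {α : Type*} {f : α → α} {p : ℕ → α} {q : ℕ}
    (h : ∀ i < q, f (p i) = p (i + 1)) {i j : ℕ} (hij : i + j ≤ q) :
    f^[j] (p i) = p (i + j) := by
  induction j generalizing i with
  | zero => rfl
  | succ j ih =>
    rw [Function.iterate_succ_apply, h i (by omega), ih (by omega), Nat.add_right_comm,
      Nat.add_assoc]

theorem SimpleGraph.Connected.exists_adj_dist_lt {V : Type*} {G : SimpleGraph V}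
    (hG : G.Connected) {r v : V} (hv : v ≠ r) : ∃ u, G.Adj v u ∧ G.dist u r < G.dist v r := by
  obtain ⟨w, hw⟩ := hG.exists_walk_length_eq_dist v r
  cases w with
  | nil => exact absurd rfl hv
  | cons hadj w' =>
    refine ⟨_, hadj, ?_⟩
    have := SimpleGraph.dist_le w'
    rw [SimpleGraph.Walk.length_cons] at hw
    omega

theorem SimpleGraph.Connected.exists_isParentMap_of_isPath {V : Type*} {G : SimpleGraph V}
    (hG : G.Connected) {u r : V} {w : G.Walk u r} (hw : w.IsPath) :
    ∃ f, G.IsParentMap f r ∧ ∀ i < w.length, f (w.getVert i) = w.getVert (i + 1) := by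
  classical
  choose! next hnext_adj hnext_dist using fun v (hv : v ≠ r) => hG.exists_adj_dist_lt hv
  set p := w.getVert
  set q := w.length
  have hp_inj : ∀ {i j}, i ≤ q → j ≤ q → p i = p j → i = j := fun hi hj h =>
    hw.getVert_injOn hi hj h
  let f : V → V := fun v =>
    if h : ∃ i < q, p i = v then p (h.choose + 1) else if v = r then r else next v
  have hf_path : ∀ i < q, f (p i) = p (i + 1) := by
    intro i hi
    have h : ∃ j < q, p j = p i := ⟨i, hi, rfl⟩
    simp only [f, dif_pos h, hp_inj h.choose_spec.1.le hi.le h.choose_spec.2]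
  have hf_off : ∀ v, (¬∃ i < q, p i = v) → v ≠ r → f v = next v := by
    intro v h hv
    simp only [f, dif_neg h, if_neg hv]
  have hp_iter : ∀ i ≤ q, f^[q - i] (p i) = r := fun i hi => by
    rw [Function.iterate_eq_of_apply_eq_succ hf_path (by omega), Nat.add_sub_cancel' hi]
    exact w.getVert_length
  refine ⟨f, ⟨?_, fun v hv => ?_, fun v => ?_⟩, hf_path⟩
  · have h : ¬∃ i < q, p i = r := fun ⟨i, hi, h⟩ =>
      absurd (hp_inj hi.le le_rfl (h.trans w.getVert_length.symm)) hi.ne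
    simp only [f, dif_neg h, if_true]
  · by_cases h : ∃ i < q, p i = v
    · obtain ⟨i, hi, rfl⟩ := h
      exact hf_path i hi ▸ w.adj_getVert_succ hi
    · exact hf_off v h hv ▸ hnext_adj v hv
  · induction hd : G.dist v r using Nat.strong_induction_on generalizing v with
    | _ d ih =>
      by_cases hvr : v = r
      · exact ⟨0, hvr⟩
      by_cases h : ∃ i < q, p i = v
      · obtain ⟨i, hi, rfl⟩ := h
        exact ⟨q - i, hp_iter i hi.le⟩
      obtain ⟨n, hn⟩ := ih _ (hd ▸ hnext_dist v hvr) (next v) rfl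
      exact ⟨n + 1, by rw [Function.iterate_succ_apply, hf_off v h hvr, hn]⟩

section Degrees

variable {V : Type*} [DecidableEq V] (G : SimpleGraph V) [DecidableRel G.Adj]

theorem sum_card_filter_adj_eq_erase {W : Finset V} {v : V} (hv : v ∈ W) :
    ∑ u ∈ W, #{w ∈ W | G.Adj u w} =
      ∑ u ∈ W.erase v, #{w ∈ W.erase v | G.Adj u w} + 2 * #{w ∈ W | G.Adj v w} := by
  have herase : ∀ u ∈ W.erase v,
      #{w ∈ W | G.Adj u w} = #{w ∈ W.erase v | G.Adj u w} + if G.Adj u v then 1 else 0 := by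
    intro u _
    rw [filter_erase]
    split_ifs with h
    · exact (card_erase_add_one (mem_filter.2 ⟨hv, h⟩)).symm
    · rw [erase_eq_of_notMem fun hm => h (mem_filter.1 hm).2, add_zero]
  have hsymm : #{u ∈ W.erase v | G.Adj u v} = #{w ∈ W | G.Adj v w} := by
    rw [filter_erase, erase_eq_of_notMem (s := {u ∈ W | G.Adj u v})
      fun hm => G.irrefl (mem_filter.1 hm).2]
    simp_rw [G.adj_comm _ v]
  rw [← add_sum_erase W _ hv, sum_congr rfl herase, sum_add_distrib, sum_boole, hsymm,
    Nat.cast_id]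
  ring

theorem exists_nonempty_forall_le_card_adj (q : ℕ) (W : Finset V)
    (hW : 2 * q * #W < ∑ u ∈ W, #{w ∈ W | G.Adj u w}) :
    ∃ U ⊆ W, U.Nonempty ∧ ∀ v ∈ U, q ≤ #{w ∈ U | G.Adj v w} := by
  induction W using Finset.strongInduction with
  | H W ih =>
    by_cases hlow : ∃ v ∈ W, #{w ∈ W | G.Adj v w} < q
    · obtain ⟨v, hv, hvq⟩ := hlow
      have hW' : 2 * q * #(W.erase v) < ∑ u ∈ W.erase v, #{w ∈ W.erase v | G.Adj u w} := by
        rw [sum_card_filter_adj_eq_erase G hv, ← card_erase_add_one hv] at hW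
        nlinarith
      obtain ⟨U, hU, hne, hdeg⟩ := ih _ (erase_ssubset hv) hW'
      exact ⟨U, hU.trans (erase_subset v W), hne, hdeg⟩
    · push Not at hlow
      refine ⟨W, subset_rfl, nonempty_iff_ne_empty.2 fun h => ?_, hlow⟩
      simp [h] at hW

theorem exists_isPath_length_eq_of_le_card_adj {q : ℕ} {U : Finset V} (hU : U.Nonempty)
    (hdeg : ∀ v ∈ U, q ≤ #{w ∈ U | G.Adj v w}) {L : ℕ} (hL : L ≤ q) :
    ∃ (u v : V) (w : G.Walk u v), w.IsPath ∧ w.length = L ∧ ∀ x ∈ w.support, x ∈ U := by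
  induction L with
  | zero =>
    obtain ⟨u, hu⟩ := hU
    exact ⟨u, u, .nil, .nil, rfl, by simpa using hu⟩
  | succ L ih =>
    obtain ⟨u, v, w, hw, hlen, hsupp⟩ := ih (by omega)
    have hlt : #(w.support.toFinset.erase u) < #{x ∈ U | G.Adj u x} := by
      have := w.support.toFinset_card_le
      rw [card_erase_of_mem (List.mem_toFinset.2 w.start_mem_support), w.length_support] at *
      have := hdeg u (hsupp u w.start_mem_support)
      omega
    obtain ⟨x, hx, hxw⟩ := exists_mem_notMem_of_card_lt_card hlt
    obtain ⟨hxU, hux⟩ := mem_filter.1 hx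
    have hxw : x ∉ w.support := fun h =>
      hxw (mem_erase.2 ⟨hux.ne.symm, List.mem_toFinset.2 h⟩)
    refine ⟨x, v, .cons hux.symm w, (w.cons_isPath_iff hux.symm).2 ⟨hw, hxw⟩, by simp [hlen],
      fun y hy => ?_⟩
    rcases List.mem_cons.1 (w.support_cons hux.symm ▸ hy) with rfl | hy
    exacts [hxU, hsupp y hy]

end Degrees

section DescendantChain

variable {V : Type*} {G : SimpleGraph V} {f : V → V} {p : ℕ → V} {q : ℕ}

theorem descendants_subset_of_le (hfp : ∀ i < q, f (p i) = p (i + 1)) {i j : ℕ} (hij : i ≤ j)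
    (hjq : j ≤ q) : descendants f (p i) ⊆ descendants f (p j) :=
  descendants_subset ⟨j - i, by
    rw [Function.iterate_eq_of_apply_eq_succ hfp (by omega), Nat.add_sub_cancel' hij]⟩

theorem notMem_descendants_of_lt (hf : G.IsParentMap f (p q)) (hp : Set.InjOn p (Set.Iic q))
    (hfp : ∀ i < q, f (p i) = p (i + 1)) {i j : ℕ} (hij : i < j) (hjq : j ≤ q) :
    p j ∉ descendants f (p i) := fun h =>
  hij.ne (hp (show i ≤ q by omega) hjq
    (hf.eq_of_mem_descendants (descendants_subset_of_le hfp hij.le hjq self_mem_descendants) h))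

theorem strictMonoOn_ncard_descendants [Finite V] (hf : G.IsParentMap f (p q))
    (hp : Set.InjOn p (Set.Iic q)) (hfp : ∀ i < q, f (p i) = p (i + 1)) :
    StrictMonoOn (fun i => (descendants f (p i)).ncard) (Set.Iic q) := fun i _ j hj hij =>
  Set.ncard_lt_ncard ((Set.ssubset_iff_of_subset (descendants_subset_of_le hfp hij.le hj)).2
    ⟨p j, self_mem_descendants, notMem_descendants_of_lt hf hp hfp hij hj⟩)

def subtreeChain (f : V → V) (p : ℕ → V) (cut : ℕ → ℕ) : ℕ → Set V
  | 0 => ∅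
  | j + 1 => descendants f (p (cut j))

variable {cut : ℕ → ℕ} {K : ℕ}

theorem monotone_subtreeChain (hfp : ∀ i < q, f (p i) = p (i + 1)) (hcut : Monotone cut)
    (hcut_le : ∀ j, cut j ≤ q) : Monotone (subtreeChain f p cut) :=
  monotone_nat_of_le_succ fun
    | 0 => Set.empty_subset _
    | j + 1 => descendants_subset_of_le hfp (hcut j.le_succ) (hcut_le _)

theorem exists_perm_comp_chainPartSizes_subtreeChain_mem [Finite V]
    (hf : G.IsParentMap f (p q))
    (hp : Set.InjOn p (Set.Iic q)) (hfp : ∀ i < q, f (p i) = p (i + 1)) (hcut : Monotone cut)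
    (hcut_le : ∀ j, cut j ≤ q) (hcut_K : cut K = q) (hcut_lt : ∀ j < K, cut j < cut (j + 1)) :
    ∃ σ : Equiv.Perm (Fin (K + 1)),
      chainPartSizes (subtreeChain f p cut) (K + 1) ∘ σ ∈ kVertexTuples G (K + 1) := by
  refine exists_perm_comp_chainPartSizes_mem_kVertexTuples G
    (monotone_subtreeChain hfp hcut hcut_le) rfl
    (by simpa [subtreeChain, hcut_K] using hf.descendants_root) fun i hi => ?_
  cases i with
  | zero => exact hf.connected_induce_descendants_sdiff (Set.notMem_empty _) fun _ => id
  | succ j =>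
    exact hf.connected_induce_descendants_sdiff
      (notMem_descendants_of_lt hf hp hfp (hcut_lt j (by omega)) (hcut_le _))
      fun _ => mem_descendants_of_apply_mem

theorem eq_of_chainPartSizes_subtreeChain_eq [Finite V] (hf : G.IsParentMap f (p q))
    (hp : Set.InjOn p (Set.Iic q)) (hfp : ∀ i < q, f (p i) = p (i + 1)) {cut' : ℕ → ℕ}
    (hcut : Monotone cut) (hcut' : Monotone cut') (hcut_le : ∀ j, cut j ≤ q)
    (hcut_le' : ∀ j, cut' j ≤ q)
    (h : chainPartSizes (subtreeChain f p cut) (K + 1) =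
      chainPartSizes (subtreeChain f p cut') (K + 1))
    {j : ℕ} (hj : j ≤ K) : cut j = cut' j := by
  have hsizes : ∀ i ∈ range (j + 1),
      (subtreeChain f p cut (i + 1) \ subtreeChain f p cut i).ncard =
        (subtreeChain f p cut' (i + 1) \ subtreeChain f p cut' i).ncard := fun i hi =>
    congrFun h ⟨i, by rw [mem_range] at hi; omega⟩
  refine (strictMonoOn_ncard_descendants hf hp hfp).injOn (hcut_le j) (hcut_le' j) ?_
  have := sum_congr rfl hsizes
  rwa [← Set.ncard_eq_sum_ncard_sdiff_succ (monotone_subtreeChain hfp hcut hcut_le) rfl,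
    ← Set.ncard_eq_sum_ncard_sdiff_succ (monotone_subtreeChain hfp hcut' hcut_le') rfl] at this

end DescendantChain

section BlockCut

variable {K t : ℕ}

def blockCut (g : Fin K → Fin t) (j : ℕ) : ℕ := if h : j < K then j * t + g ⟨j, h⟩ else K * t

variable (g : Fin K → Fin t)

theorem blockCut_of_le {j : ℕ} (hj : K ≤ j) : blockCut g j = K * t := by
  simp [blockCut, not_lt.2 hj]

theorem blockCut_lt_mul {j : ℕ} (hj : j < K) : blockCut g j < (j + 1) * t := by
  rw [blockCut, dif_pos hj, Nat.succ_mul]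
  exact Nat.add_lt_add_left (g _).isLt _

theorem blockCut_lt_succ {j : ℕ} (hj : j < K) : blockCut g j < blockCut g (j + 1) := by
  refine (blockCut_lt_mul g hj).trans_le ?_
  by_cases hj' : j + 1 < K
  · simp [blockCut, dif_pos hj']
  · rw [blockCut_of_le g (not_lt.1 hj')]
    exact Nat.mul_le_mul_right t hj

theorem blockCut_le (j : ℕ) : blockCut g j ≤ K * t := by
  by_cases hj : j < K
  · exact (blockCut_lt_mul g hj).le.trans (Nat.mul_le_mul_right t hj)
  · exact (blockCut_of_le g (not_lt.1 hj)).le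

theorem monotone_blockCut : Monotone (blockCut g) :=
  monotone_nat_of_le_succ fun j => by
    by_cases hj : j < K
    · exact (blockCut_lt_succ g hj).le
    · rw [blockCut_of_le g (not_lt.1 hj), blockCut_of_le g (by omega)]

theorem eq_of_blockCut_eq {g' : Fin K → Fin t} (h : ∀ j ≤ K, blockCut g j = blockCut g' j) :
    g = g' := by
  funext ⟨j, hj⟩
  have := h j hj.le
  simp only [blockCut, dif_pos hj] at this
  exact Fin.ext (by omega)

end BlockCut

theorem two_mul_mul_lt_of_le_floor {K t n m : ℕ} (hK : 0 < K) (ht : 0 < t) (hn : 0 < n)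
    (h : t ≤ ⌊2 * (m : ℝ) / n / (4 * K)⌋₊) : 2 * (K * t) * n < 2 * m := by
  have hK' : (0 : ℝ) < K := by exact_mod_cast hK
  have hn' : (0 : ℝ) < n := by exact_mod_cast hn
  have h1 := (Nat.le_floor_iff (by positivity)).1 h
  rw [le_div_iff₀ (by positivity), le_div_iff₀ hn'] at h1
  have h2 : 4 * (K * t) * n ≤ 2 * m := by
    exact_mod_cast (by linarith : (4 * (K * t) * n : ℝ) ≤ 2 * m)
  have : 0 < K * t * n := by positivity
  nlinarith

theorem sum_card_filter_adj_eq_two_mul_ncard_edgeSet {V : Type*} [Fintype V] (G : SimpleGraph V)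
    [DecidableRel G.Adj] : ∑ u, #{w | G.Adj u w} = 2 * G.edgeSet.ncard := by
  simp_rw [← G.neighborFinset_eq_filter, G.card_neighborFinset_eq_degree,
    G.sum_degrees_eq_twice_card_edges, ← G.coe_edgeFinset, Set.ncard_coe_finset]

theorem pi_ge_general {V : Type*} [Fintype V] (G : SimpleGraph V) (hG : G.Connected)
    (k : ℕ) (hk : 2 ≤ k)
    (d : ℝ) (hd : d = 2 * (G.edgeSet.ncard : ℝ) / (Fintype.card V : ℝ)) :
    (1 / (Nat.factorial k : ℝ)) * (⌊d / (4 * ((k : ℝ) - 1))⌋₊ : ℝ) ^ (k - 1) ≤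
      (piG G k : ℝ) := by
  classical
  obtain ⟨K, rfl⟩ : ∃ K, k = K + 1 := ⟨k - 1, by omega⟩
  rw [show ((K + 1 : ℕ) : ℝ) - 1 = K by push_cast; ring, Nat.add_sub_cancel, hd]
  set t := ⌊2 * (G.edgeSet.ncard : ℝ) / (Fintype.card V) / (4 * K)⌋₊ with ht_def
  rcases Nat.eq_zero_or_pos t with ht | ht
  · simp [ht, zero_pow (show K ≠ 0 by omega)]
  have hdense : 2 * (K * t) * #(univ : Finset V) < ∑ u, #{w | G.Adj u w} := by
    rw [sum_card_filter_adj_eq_two_mul_ncard_edgeSet, card_univ]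
    exact two_mul_mul_lt_of_le_floor (by omega) ht (Fintype.card_pos_iff.2 hG.nonempty)
      ht_def.le
  obtain ⟨U, -, hU, hdeg⟩ := exists_nonempty_forall_le_card_adj G (K * t) univ hdense
  obtain ⟨_, _, w, hw, hlen, -⟩ := exists_isPath_length_eq_of_le_card_adj G hU hdeg le_rfl
  obtain ⟨f, hf, hfw⟩ := hG.exists_isParentMap_of_isPath hw
  rw [← w.getVert_length, hlen] at hf
  rw [hlen] at hfw
  have hp : Set.InjOn w.getVert (Set.Iic (K * t)) := hlen ▸ hw.getVert_injOn
  have hcut_le := blockCut_le (K := K) (t := t)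
  choose σ hσ using fun g : Fin K → Fin t =>
    exists_perm_comp_chainPartSizes_subtreeChain_mem hf hp hfw (monotone_blockCut g)
      (hcut_le g) (blockCut_of_le g le_rfl) fun _ => blockCut_lt_succ g
  have hcount := card_le_factorial_mul_ncard_of_comp_perm_mem (fun g g' h => eq_of_blockCut_eq g
    fun _ hj => eq_of_chainPartSizes_subtreeChain_eq hf hp hfw (monotone_blockCut g)
      (monotone_blockCut g') (hcut_le g) (hcut_le g') h hj) σ (kVertexTuples_finite G) hσ
  simp only [Fintype.card_fun, Fintype.card_fin] at hcount
  rw [one_div_mul_eq_div, div_le_iff₀ (by positivity), mul_comm]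
  exact_mod_cast hcount

/-- for a finite connected graph `G` on `n ≥ k` vertices with average
degree `d` and fixed `k ≥ 2`, `π(G,k) ≥ (1/k!) ⌊d/(4(k−1))⌋^(k−1)`. -/
theorem pi_ge {V : Type*} [Fintype V] (G : SimpleGraph V) (hG : G.Connected)
    (k : ℕ) (hk : 2 ≤ k) (hkn : k ≤ Fintype.card V)
    (d : ℝ) (hd : d = 2 * (G.edgeSet.ncard : ℝ) / (Fintype.card V : ℝ)) :
    (1 / (Nat.factorial k : ℝ)) * (⌊d / (4 * ((k : ℝ) - 1))⌋₊ : ℝ) ^ (k - 1) ≤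
      (piG G k : ℝ) :=
  pi_ge_general G hG k hk d hd
end
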